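/- (Combination lemma) Let α and β be 3-partitions arising from E⁻¹-closed semikernels A = αᵗ and B = βᵗ of a digraph G. If βᵗ ∪ βᶠ ⊄⊆ αᵗ ∪ αᶠ (not a subset), then setting Q = βᵗ ∩ αᵖ, the set S = αᵗ ∪ Q is a nonempty-extension E⁻¹-closed semikernel with αᵗ ∪ αᶠ ⊊ S ∪ E⁻¹(S). -/

import Mathlib

/-- Out-neighbours of a set `X` under edge relation `E`. -/
def outS {V : Type*} (E : V → V → Prop) (X : Set V) : Set V := {y | ∃ x ∈ X, E x y}

/-- In-neighbours of a set `X` under edge relation `E`. -/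
def inS {V : Type*} (E : V → V → Prop) (X : Set V) : Set V := {y | ∃ x ∈ X, E y x}

/-- `K` is a kernel of the digraph `(G,E)`. -/
def IsKernel {V : Type*} (G : Set V) (E : V → V → Prop) (K : Set V) : Prop :=
  K ⊆ G ∧ inS E K = G \ K

/-- `S` is a semikernel of the digraph `(G,E)`. -/
def IsSemikernel {V : Type*} (G : Set V) (E : V → V → Prop) (S : Set V) : Prop :=
  S ⊆ G ∧ outS E S ⊆ inS E S ∧ inS E S ⊆ G \ S


/-! With `T X := X ∪ inS E X` and `Q := B ∩ (G \ T A)`, every in-neighbour of `B` lies in `T A` or in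
`inS E Q`, by the closedness of `A`; hence `T B ⊆ T A ∪ T Q = T (A ∪ Q)`. This single inclusion gives
both the closedness of `A ∪ Q` (since `inS E (T Q) ⊆ inS E (T B) ⊆ T B`) and the strictness of
`T A ⊆ T (A ∪ Q)` (otherwise `T B ⊆ T A`). The semikernel axioms for `A ∪ Q` hold because `Q` avoids
`T A`, so no edge joins `A` and `Q` in either direction. -/

/-- The paper's `E⁻¹`-closedness. -/
def IsInClosed {V : Type*} (E : V → V → Prop) (S : Set V) : Prop :=
  inS E (S ∪ inS E S) ⊆ S ∪ inS E S

section

variable {V : Type*} {G : Set V} {E : V → V → Prop} {A B T X Y : Set V}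

open Set

theorem inS_mono (h : X ⊆ Y) : inS E X ⊆ inS E Y :=
  fun _ ⟨x, hx, hyx⟩ => ⟨x, h hx, hyx⟩

theorem inS_union : inS E (X ∪ Y) = inS E X ∪ inS E Y := by
  ext y
  simp only [inS, mem_union, mem_ofPred_eq, or_and_right, exists_or]

theorem union_inS_mono (h : X ⊆ Y) : X ∪ inS E X ⊆ Y ∪ inS E Y :=
  union_subset_union h (inS_mono h)

theorem union_inS_union : (X ∪ Y) ∪ inS E (X ∪ Y) = (X ∪ inS E X) ∪ (Y ∪ inS E Y) := by
  rw [inS_union, union_union_union_comm]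

theorem inS_subset_union_inS_inter_diff (hT : inS E T ⊆ T) (hBG : B ⊆ G) :
    inS E B ⊆ T ∪ inS E (B ∩ (G \ T)) := by
  rintro y ⟨b, hb, hyb⟩
  by_cases hbT : b ∈ T
  · exact Or.inl (hT ⟨b, hbT, hyb⟩)
  · exact Or.inr ⟨b, ⟨hb, hBG hb, hbT⟩, hyb⟩

theorem union_inS_subset_union_inS_union_inter_diff (hA : IsInClosed E A) (hBG : B ⊆ G) :
    B ∪ inS E B ⊆ (A ∪ (B ∩ (G \ (A ∪ inS E A)))) ∪ inS E (A ∪ (B ∩ (G \ (A ∪ inS E A)))) := by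
  rw [union_inS_union]
  rintro y (hyB | hyN)
  · by_cases hyT : y ∈ A ∪ inS E A
    · exact Or.inl hyT
    · exact Or.inr (Or.inl ⟨hyB, hBG hyB, hyT⟩)
  · rcases inS_subset_union_inS_inter_diff hA hBG hyN with hy | hy
    exacts [Or.inl hy, Or.inr (Or.inr hy)]

theorem IsSemikernel.union_inter_diff (hA : IsSemikernel G E A) (hB : IsSemikernel G E B)
    (hAcl : IsInClosed E A) : IsSemikernel G E (A ∪ (B ∩ (G \ (A ∪ inS E A)))) := by
  obtain ⟨hAG, hAout, hAin⟩ := hA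
  obtain ⟨hBG, hBout, hBin⟩ := hB
  refine ⟨union_subset hAG (inter_subset_right.trans sdiff_subset), ?_, ?_⟩
  · rintro y ⟨x, hxA | ⟨hxB, -, hxT⟩, hxy⟩
    · exact inS_mono subset_union_left (hAout ⟨x, hxA, hxy⟩)
    · rcases inS_subset_union_inS_inter_diff hAcl hBG (hBout ⟨x, hxB, hxy⟩) with
        (hyA | hyN) | hyN
      · exact absurd (Or.inr ⟨y, hyA, hxy⟩) hxT
      · exact inS_mono subset_union_left hyN
      · exact inS_mono subset_union_right hyN
  · rintro y ⟨x, hxA | ⟨hxB, -, hxT⟩, hyx⟩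
    · obtain ⟨hyG, hyA⟩ := hAin ⟨x, hxA, hyx⟩
      refine ⟨hyG, ?_⟩
      rintro (hyA' | ⟨-, -, hyT⟩)
      exacts [hyA hyA', hyT (Or.inr ⟨x, hxA, hyx⟩)]
    · obtain ⟨hyG, hyB⟩ := hBin ⟨x, hxB, hyx⟩
      refine ⟨hyG, ?_⟩
      rintro (hyA | ⟨hyB', -, -⟩)
      exacts [hxT (Or.inr (hAout ⟨y, hyA, hyx⟩)), hyB hyB']

theorem IsInClosed.union_inter_diff (hA : IsInClosed E A) (hB : IsInClosed E B) (hBG : B ⊆ G) :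
    IsInClosed E (A ∪ (B ∩ (G \ (A ∪ inS E A)))) := by
  intro y hy
  rw [union_inS_union, inS_union] at hy
  rcases hy with hy | hy
  · exact union_inS_mono subset_union_left (hA hy)
  · exact union_inS_subset_union_inS_union_inter_diff hA hBG
      (hB (inS_mono (union_inS_mono inter_subset_left) hy))

theorem union_inS_ssubset_union_inS_union_inter_diff (hA : IsInClosed E A) (hBG : B ⊆ G)
    (hns : ¬ B ∪ inS E B ⊆ A ∪ inS E A) :
    A ∪ inS E A ⊂ (A ∪ (B ∩ (G \ (A ∪ inS E A)))) ∪ inS E (A ∪ (B ∩ (G \ (A ∪ inS E A)))) :=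
  ⟨union_inS_mono subset_union_left,
    fun h => hns ((union_inS_subset_union_inS_union_inter_diff hA hBG).trans h)⟩

end

theorem stmt11_general {V : Type*} (G : Set V) (E : V → V → Prop)
    (A B : Set V)
    (hA : IsSemikernel G E A) (hAcl : inS E (A ∪ inS E A) ⊆ A ∪ inS E A)
    (hB : IsSemikernel G E B) (hBcl : inS E (B ∪ inS E B) ⊆ B ∪ inS E B)
    (hns : ¬ (B ∪ inS E B ⊆ A ∪ inS E A)) :
    IsSemikernel G E (A ∪ (B ∩ (G \ (A ∪ inS E A)))) ∧
    inS E ((A ∪ (B ∩ (G \ (A ∪ inS E A)))) ∪ inS E (A ∪ (B ∩ (G \ (A ∪ inS E A)))))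
        ⊆ (A ∪ (B ∩ (G \ (A ∪ inS E A)))) ∪ inS E (A ∪ (B ∩ (G \ (A ∪ inS E A)))) ∧
    (A ∪ inS E A) ⊂
      (A ∪ (B ∩ (G \ (A ∪ inS E A)))) ∪ inS E (A ∪ (B ∩ (G \ (A ∪ inS E A)))) :=
  ⟨hA.union_inter_diff hB hAcl, IsInClosed.union_inter_diff hAcl hBcl hB.1,
    union_inS_ssubset_union_inS_union_inter_diff hAcl hB.1 hns⟩

theorem stmt11 {V : Type*} (G : Set V) (E : V → V → Prop)
    (hE : ∀ x y, E x y → x ∈ G ∧ y ∈ G) (A B : Set V)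
    (hA : IsSemikernel G E A) (hAcl : inS E (A ∪ inS E A) ⊆ A ∪ inS E A)
    (hB : IsSemikernel G E B) (hBcl : inS E (B ∪ inS E B) ⊆ B ∪ inS E B)
    (hns : ¬ (B ∪ inS E B ⊆ A ∪ inS E A)) :
    IsSemikernel G E (A ∪ (B ∩ (G \ (A ∪ inS E A)))) ∧
    inS E ((A ∪ (B ∩ (G \ (A ∪ inS E A)))) ∪ inS E (A ∪ (B ∩ (G \ (A ∪ inS E A)))))
        ⊆ (A ∪ (B ∩ (G \ (A ∪ inS E A)))) ∪ inS E (A ∪ (B ∩ (G \ (A ∪ inS E A)))) ∧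
    (A ∪ inS E A) ⊂
      (A ∪ (B ∩ (G \ (A ∪ inS E A)))) ∪ inS E (A ∪ (B ∩ (G \ (A ∪ inS E A)))) :=
  stmt11_general G E A B hA hAcl hB hBcl hns
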